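/- Let ε > 0 and let (u, m) be a classical solution of the discounted MFG system. Then the integral identity ∫_{T^d} ( (1+m)/2 )|Du|² + m g(m) dx = ∫_{T^d} (m − 1)V + g(m) dx holds. -/

import Mathlib

open MeasureTheory Set

noncomputable def pd (d : ℕ) (i : Fin d) (f : (Fin d → ℝ) → ℝ) : (Fin d → ℝ) → ℝ :=
  fun x => fderiv ℝ f x (Pi.single i 1)

noncomputable def gradSq (d : ℕ) (u : (Fin d → ℝ) → ℝ) (x : Fin d → ℝ) : ℝ :=
  ∑ i, pd d i u x ^ 2

noncomputable def divUp (d : ℕ) (m u : (Fin d → ℝ) → ℝ) (x : Fin d → ℝ) : ℝ :=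
  ∑ i, pd d i (fun y => m y * pd d i u y) x

/-- `f` is `ℤ^d`-periodic, i.e. a function on the flat torus `T^d`. -/
def ZPer (d : ℕ) (f : (Fin d → ℝ) → ℝ) : Prop :=
  ∀ (x : Fin d → ℝ) (k : Fin d → ℤ), f (x + fun i => (k i : ℝ)) = f x

/-- `f` has finite `α`-Hölder seminorm. -/
def HolderSemi (α : ℝ) {E : Type*} [PseudoMetricSpace E] (f : E → ℝ) : Prop :=
  ∃ C : ℝ, 0 ≤ C ∧ ∀ x y, |f x - f y| ≤ C * dist x y ^ α

/-- `f` is of class `C^{1,α}`. -/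
def C1Hold (d : ℕ) (α : ℝ) (f : (Fin d → ℝ) → ℝ) : Prop :=
  ContDiff ℝ 1 f ∧ ∀ i, HolderSemi α (pd d i f)

/-- `f` is of class `C^{2,α}`. -/
def C2Hold (d : ℕ) (α : ℝ) (f : (Fin d → ℝ) → ℝ) : Prop :=
  ContDiff ℝ 2 f ∧ ∀ i j, HolderSemi α (pd d i (pd d j f))

/-- `f` is locally `α`-Hölder on `s`. -/
def LocHolderOn (α : ℝ) (f : ℝ → ℝ) (s : Set ℝ) : Prop :=
  ∀ K : Set ℝ, IsCompact K → K ⊆ s →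
    ∃ C : ℝ, 0 ≤ C ∧ ∀ x ∈ K, ∀ y ∈ K, |f x - f y| ≤ C * dist x y ^ α

/-- Standing hypotheses on `g`: strictly increasing and continuous on `[0,∞)`,
of class `C^{1,α}` on `(0,∞)`. -/
def Ghyp (α : ℝ) (g : ℝ → ℝ) : Prop :=
  StrictMonoOn g (Ici 0) ∧ ContinuousOn g (Ici 0) ∧
    DifferentiableOn ℝ g (Ioi 0) ∧ LocHolderOn α (deriv g) (Ioi 0)

/-- Standing hypotheses on `V`: a `C^{1,α}` function on the torus. -/
def Vhyp (d : ℕ) (α : ℝ) (V : (Fin d → ℝ) → ℝ) : Prop :=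
  ZPer d V ∧ C1Hold d α V

/-- The oscillation of `V` over the torus. -/
noncomputable def oscV (d : ℕ) (V : (Fin d → ℝ) → ℝ) : ℝ :=
  sSup (V '' Icc (0 : Fin d → ℝ) 1) - sInf (V '' Icc (0 : Fin d → ℝ) 1)

/-- Assumption (A1): `g⁻¹(g(1) − osc V) > 0`, i.e. `g(1) − osc V` is attained by `g` on `(0,∞)`. -/
def A1 (d : ℕ) (g : ℝ → ℝ) (V : (Fin d → ℝ) → ℝ) : Prop :=
  g 1 - oscV d V ∈ g '' Ioi (0 : ℝ)

/-- Assumption (A2). -/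
def A2 (g : ℝ → ℝ) : Prop :=
  ∃ C₁ C₂ β : ℝ, 0 < C₁ ∧ 0 < C₂ ∧
    (∀ z : ℝ, 0 < z → C₁ * z ^ β ≤ deriv g z) ∧
    (∀ z : ℝ, 0 ≤ z → g z ≤ C₂ + z * g z)

/-- A classical solution `(u, m)` of the discounted MFG system
`ε u + |Du|²/2 + V = g(m)`, `ε m − div(m Du) = ε` on `T^d`. -/
structure DiscSol (d : ℕ) (α : ℝ) (g : ℝ → ℝ) (V : (Fin d → ℝ) → ℝ) (ε : ℝ)
    (u m : (Fin d → ℝ) → ℝ) : Prop where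
  per_u : ZPer d u
  per_m : ZPer d m
  reg_u : C2Hold d α u
  reg_m : C1Hold d α m
  m_nonneg : ∀ x, 0 ≤ m x
  hj : ∀ x, ε * u x + (1 / 2) * gradSq d u x + V x = g (m x)
  fp : ∀ x, ε * m x - divUp d m u x = ε

/-- A classical solution `(u, m, H̄)` of the ergodic MFG system
`|Du|²/2 + V = g(m) + H̄`, `−div(m Du) = 0`, `m ≥ 0`, `∫ m = 1` on `T^d`. -/
structure ErgSol (d : ℕ) (α : ℝ) (g : ℝ → ℝ) (V : (Fin d → ℝ) → ℝ)
    (u m : (Fin d → ℝ) → ℝ) (H : ℝ) : Prop where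
  per_u : ZPer d u
  per_m : ZPer d m
  reg_u : C2Hold d α u
  reg_m : C1Hold d α m
  m_nonneg : ∀ x, 0 ≤ m x
  m_mass : (∫ x in Icc (0 : Fin d → ℝ) 1, m x) = 1
  hj : ∀ x, (1 / 2) * gradSq d u x + V x = g (m x) + H
  fp : ∀ x, divUp d m u x = 0

/-!
Multiplying the Hamilton–Jacobi equation by `1 - m` and the Fokker–Planck equation by `u` and
adding gives, pointwise,
`(1+m)/2 |Du|² + m g(m) = (m-1) V + g(m) + (m |Du|² + u div(m Du))`.
The last bracket is `div(u m Du)`, the divergence of a periodic `C¹` vector field, so its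
integral over the unit cube vanishes by the divergence theorem: the fluxes through opposite
faces cancel.
-/

section PartialDerivatives

variable {d : ℕ}

lemma ContDiff.pd {n : WithTop ℕ∞} {f : (Fin d → ℝ) → ℝ} (hf : ContDiff ℝ (n + 1) f)
    (i : Fin d) : ContDiff ℝ n (_root_.pd d i f) :=
  (hf.fderiv_right le_rfl).clm_apply contDiff_const

lemma ContDiff.continuous_pd {f : (Fin d → ℝ) → ℝ} (hf : ContDiff ℝ 1 f) (i : Fin d) :
    Continuous (_root_.pd d i f) :=
  (ContDiff.pd (n := 0) hf i).continuous

lemma pd_mul {f g : (Fin d → ℝ) → ℝ} {x : Fin d → ℝ} (hf : DifferentiableAt ℝ f x)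
    (hg : DifferentiableAt ℝ g x) (i : Fin d) :
    pd d i (fun y => f y * g y) x = f x * pd d i g x + g x * pd d i f x := by
  simp [pd, fderiv_fun_mul hf hg]

lemma ZPer.pd {f : (Fin d → ℝ) → ℝ} (hf : ZPer d f) (i : Fin d) : ZPer d (pd d i f) := by
  intro x k
  have hshift : (fun y => f (y + fun j => (k j : ℝ))) = f := funext fun y => hf y k
  simp only [_root_.pd, ← fderiv_comp_add_right, hshift]

lemma ZPer.apply_insertNth_one {n : ℕ} {f : (Fin (n + 1) → ℝ) → ℝ} (hf : ZPer (n + 1) f)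
    (i : Fin (n + 1)) (x : Fin n → ℝ) : f (i.insertNth 1 x) = f (i.insertNth 0 x) := by
  have hshift : i.insertNth (1 : ℝ) x
      = i.insertNth 0 x + fun j => ((Pi.single i 1 : Fin (n + 1) → ℤ) j : ℝ) := by
    funext j
    rcases eq_or_ne j i with rfl | hj
    · simp
    · obtain ⟨k, rfl⟩ := Fin.exists_succAbove_eq hj
      simp [Fin.succAbove_ne i k]
  rw [hshift, hf]

end PartialDerivatives

lemma integral_sum_pd_eq_zero {d : ℕ} (F : Fin d → (Fin d → ℝ) → ℝ)
    (hF : ∀ i, ContDiff ℝ 1 (F i)) (hper : ∀ i, ZPer d (F i)) :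
    ∫ x in Icc (0 : Fin d → ℝ) 1, ∑ i, pd d i (F i) x = 0 := by
  cases d with
  | zero => simp
  | succ n =>
    have hcont : Continuous fun x => ∑ i, pd (n + 1) i (F i) x :=
      continuous_finsetSum _ fun i _ => (hF i).continuous_pd i
    refine (integral_divergence_of_hasFDerivAt_off_countable' 0 1 zero_le_one F
      (fun i => fderiv ℝ (F i)) ∅ countable_empty (fun i => (hF i).continuous.continuousOn)
      (fun x _ i => ((hF i).differentiable one_ne_zero x).hasFDerivAt)
      hcont.integrableOn_Icc).trans ?_
    simp [(hper _).apply_insertNth_one]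

lemma integral_mul_gradSq_add_mul_divUp_eq_zero {d : ℕ} {u m : (Fin d → ℝ) → ℝ}
    (hu : ContDiff ℝ 2 u) (hm : ContDiff ℝ 1 m) (hu_per : ZPer d u) (hm_per : ZPer d m) :
    ∫ x in Icc (0 : Fin d → ℝ) 1, (m x * gradSq d u x + u x * divUp d m u x) = 0 := by
  have hDu : ∀ i, ContDiff ℝ 1 (pd d i u) := fun i => hu.pd (n := 1) i
  have hflux : ∀ i, ContDiff ℝ 1 fun y => m y * pd d i u y := fun i => hm.mul (hDu i)
  have hdiv : ∀ x, ∑ i, pd d i (fun y => u y * (m y * pd d i u y)) x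
      = m x * gradSq d u x + u x * divUp d m u x := by
    intro x
    simp only [pd_mul ((hu.differentiable two_ne_zero) x)
      (((hflux _).differentiable one_ne_zero) x), Finset.sum_add_distrib, gradSq, divUp,
      Finset.mul_sum]
    rw [add_comm]
    congr 1
    exact Finset.sum_congr rfl fun i _ => by ring
  simp_rw [← hdiv]
  exact integral_sum_pd_eq_zero _ (fun i => (hu.of_le one_le_two).mul (hflux i))
    fun i x k => by simp only [hu_per x k, hm_per x k, (hu_per.pd i) x k]

lemma DiscSol.energy_integrand_eq {d : ℕ} {α ε : ℝ} {g : ℝ → ℝ} {V u m : (Fin d → ℝ) → ℝ}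
    (hsol : DiscSol d α g V ε u m) (x : Fin d → ℝ) :
    (1 + m x) / 2 * gradSq d u x + m x * g (m x)
      = ((m x - 1) * V x + g (m x)) + (m x * gradSq d u x + u x * divUp d m u x) := by
  linear_combination (1 - m x) * hsol.hj x + u x * hsol.fp x

theorem stmt13 (d : ℕ) (α : ℝ)
    (g : ℝ → ℝ) (V : (Fin d → ℝ) → ℝ) (hg : Ghyp α g) (hV : Vhyp d α V)
    (ε : ℝ) (u m : (Fin d → ℝ) → ℝ)
    (hsol : DiscSol d α g V ε u m) :
    (∫ x in Icc (0 : Fin d → ℝ) 1,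
        ((1 + m x) / 2 * gradSq d u x + m x * g (m x)))
      = ∫ x in Icc (0 : Fin d → ℝ) 1, ((m x - 1) * V x + g (m x)) := by
  have hu : ContDiff ℝ 2 u := hsol.reg_u.1
  have hm : ContDiff ℝ 1 m := hsol.reg_m.1
  have hDu : ∀ i, ContDiff ℝ 1 (pd d i u) := fun i => hu.pd (n := 1) i
  have hgm : Continuous fun x => g (m x) :=
    hg.2.1.comp_continuous hm.continuous hsol.m_nonneg
  have hrhs : Continuous fun x => (m x - 1) * V x + g (m x) :=
    ((hm.continuous.sub continuous_const).mul hV.2.1.continuous).add hgm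
  have hdiv : Continuous fun x => m x * gradSq d u x + u x * divUp d m u x :=
    (hm.continuous.mul (continuous_finsetSum _ fun i _ => ((hDu i).continuous).pow 2)).add
      (hu.continuous.mul (continuous_finsetSum _ fun i _ => (hm.mul (hDu i)).continuous_pd i))
  simp_rw [hsol.energy_integrand_eq]
  rw [integral_add hrhs.integrableOn_Icc hdiv.integrableOn_Icc,
    integral_mul_gradSq_add_mul_divUp_eq_zero hu hm hsol.per_u hsol.per_m, add_zero]
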